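/- arXiv:2508.13016 — 2 statements merged into one kernel-verified Lean document; each statement's English description precedes it below -/
import Mathlib

section
/- Let (x_n) be an interval-filling sequence of positive reals. The range of its cardinal function equals {1,2} if and only if there exists a nonzero constant c with x_n = c/2^n for all n. -/
open Set

/-- The achievement set of a sequence: all subsums. -/
noncomputable def achSet (x : ℕ → ℝ) : Set ℝ :=
  {t | ∃ S : Set ℕ, ∑' n : S, x n = t}

/-- The cardinal function: the number of representations of `t` as a subsum. -/
noncomputable def cardFun (x : ℕ → ℝ) (t : ℝ) : Cardinal :=
  Cardinal.mk {S : Set ℕ // ∑' n : S, x n = t}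

/-- The tail sum `r_k = ∑_{n > k} x n`. -/
noncomputable def tailSum (x : ℕ → ℝ) (k : ℕ) : ℝ := ∑' n, x (k + 1 + n)

/-- Prepending a term to a sequence. -/
def prepend (y : ℝ) (x : ℕ → ℝ) : ℕ → ℝ := fun n =>
  match n with
  | 0 => y
  | Nat.succ m => x m

/-!
If `x k < r k` for some `k`, the greedy algorithm represents `x k` by a set `A ⊆ (k, ∞)` which,
having sum `x k ≠ r k`, misses some `p > k`; it also represents `x p` by a set `B ⊆ (p, ∞)`.
Then `{k, p}`, `A ∪ {p}` and `{k} ∪ B` are three representations of `x k + x p`. So the range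
`{1, 2}` forces `x n = r n` for all `n`, i.e. `x (n + 1) = x n / 2`.

Conversely, let `x n = r n` for all `n`. If `S ≠ T` have the same sum and first differ at
`n ∈ S \ T`, comparing the sums beyond `n` with `r n = x n` forces `S ⊆ [0, n]` and
`(n, ∞) ⊆ T`. So of two distinct representations exactly one is finite, and every point has at
most two. The point `0` has only `∅`, while `x 0` has both `{0}` and `(0, ∞)`.
-/

open Filter Topology

lemma three_le_mk_of_ne {α : Type*} {a b c : α} (hab : a ≠ b) (hac : a ≠ c) (hbc : b ≠ c) :
    3 ≤ Cardinal.mk α := by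
  classical
  calc (3 : Cardinal) = Cardinal.mk ({a, b, c} : Finset α) := by
        rw [Cardinal.mk_coe_finset, Finset.card_eq_three.2 ⟨a, b, c, hab, hac, hbc, rfl⟩]; rfl
    _ ≤ Cardinal.mk α := Cardinal.mk_subtype_le _

lemma tsum_insert_of_notMem {β : Type*} {f : β → ℝ} (hf : Summable f) {a : β} {s : Set β}
    (ha : a ∉ s) : ∑' n : ↥(insert a s), f n = f a + ∑' n : s, f n := by
  rw [insert_eq, Summable.tsum_union_disjoint (disjoint_singleton_left.2 ha)
    (hf.subtype _) (hf.subtype _), tsum_singleton]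

section

variable {x : ℕ → ℝ}

lemma tsum_Ioi_eq_tailSum (k : ℕ) : ∑' n : Ioi k, x n = tailSum x k := by
  have hrange : range (fun n => k + 1 + n) = Ioi k := by
    ext j
    simp [Nat.lt_iff_add_one_le, le_iff_exists_add, eq_comm]
  rw [← hrange, tsum_range x (add_right_injective _)]
  rfl

lemma tailSum_eq_tsum_add (x : ℕ → ℝ) (n : ℕ) : tailSum x n = ∑' i, x (i + (n + 1)) :=
  tsum_congr fun i => by rw [add_comm]

lemma tsum_add_eq_add_tailSum (hsum : Summable x) (n : ℕ) :
    ∑' i, x (i + n) = x n + tailSum x n := by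
  rw [((summable_nat_add_iff n).2 hsum).tsum_eq_zero_add, zero_add, tailSum_eq_tsum_add]
  exact congrArg _ (tsum_congr fun i => congrArg x (by omega))

lemma tailSum_eq_add_tailSum_succ (hsum : Summable x) (n : ℕ) :
    tailSum x n = x (n + 1) + tailSum x (n + 1) := by
  rw [tailSum_eq_tsum_add, tsum_add_eq_add_tailSum hsum]

noncomputable def greedySum (x : ℕ → ℝ) (t : ℝ) : ℕ → ℝ
  | 0 => 0
  | n + 1 => greedySum x t n + if x n ≤ t - greedySum x t n then x n else 0

lemma sub_greedySum_mem_Icc (hsum : Summable x) (hIF : ∀ n, x n ≤ tailSum x n) {t : ℝ}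
    (ht : t ∈ Icc 0 (∑' n, x n)) (n : ℕ) :
    t - greedySum x t n ∈ Icc 0 (∑' i, x (i + n)) := by
  induction n with
  | zero => simpa [greedySum] using ht
  | succ n ih =>
    have hrec := tsum_add_eq_add_tailSum hsum n
    rw [← tailSum_eq_tsum_add]
    by_cases h : x n ≤ t - greedySum x t n
    · simp only [greedySum, if_pos h]
      constructor <;> linarith [ih.2]
    · simp only [greedySum, if_neg h, add_zero]
      exact ⟨ih.1, by linarith [hIF n]⟩

lemma Icc_subset_achSet (h0 : ∀ n, 0 ≤ x n) (hsum : Summable x)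
    (hIF : ∀ n, x n ≤ tailSum x n) : Icc 0 (∑' n, x n) ⊆ achSet x := by
  intro t ht
  set S : Set ℕ := {n | x n ≤ t - greedySum x t n}
  have hpartial : ∀ n, ∑ i ∈ Finset.range n, S.indicator x i = greedySum x t n := by
    intro n
    induction n with
    | zero => simp [greedySum]
    | succ n ih => rw [Finset.sum_range_succ, ih, indicator_apply]; rfl
  have hrem : Tendsto (fun n => t - greedySum x t n) atTop (𝓝 0) :=
    squeeze_zero (fun n => (sub_greedySum_mem_Icc hsum hIF ht n).1)
      (fun n => (sub_greedySum_mem_Icc hsum hIF ht n).2) (tendsto_sum_nat_add x)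
  have hlim : Tendsto (greedySum x t) atTop (𝓝 t) := by
    simpa using hrem.const_sub t
  have hS : HasSum (S.indicator x) t := by
    rw [hasSum_iff_tendsto_nat_of_nonneg (fun i => indicator_nonneg (fun j _ => h0 j) i)]
    simpa only [hpartial] using hlim
  exact ⟨S, by rw [tsum_subtype, hS.tsum_eq]⟩

lemma exists_subset_Ioi_tsum_eq (h0 : ∀ n, 0 ≤ x n) (hsum : Summable x)
    (hIF : ∀ n, x n ≤ tailSum x n) (k : ℕ) {t : ℝ} (ht : t ∈ Icc 0 (tailSum x k)) :
    ∃ A ⊆ Ioi k, ∑' n : A, x n = t := by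
  set y : ℕ → ℝ := fun n => x (k + 1 + n)
  have hysum : Summable y :=
    ((summable_nat_add_iff (k + 1)).2 hsum).congr fun n => congrArg x (add_comm _ _)
  have hyIF : ∀ n, y n ≤ tailSum y n := fun n => by
    convert hIF (k + 1 + n) using 1
    exact tsum_congr fun m => congrArg x (by omega)
  obtain ⟨B, hB⟩ := Icc_subset_achSet (fun n => h0 _) hysum hyIF ht
  refine ⟨(fun n => k + 1 + n) '' B, ?_, ?_⟩
  · rintro _ ⟨b, -, rfl⟩
    show k < k + 1 + b
    omega
  · rw [tsum_image x (add_right_injective _).injOn]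
    exact hB

lemma exists_three_le_cardFun (hpos : ∀ n, 0 < x n) (hsum : Summable x)
    (hIF : ∀ n, x n ≤ tailSum x n) {k : ℕ} (hk : x k < tailSum x k) :
    ∃ t ∈ achSet x, 3 ≤ cardFun x t := by
  have h0 : ∀ n, 0 ≤ x n := fun n => (hpos n).le
  obtain ⟨A, hAk, hA⟩ := exists_subset_Ioi_tsum_eq h0 hsum hIF k ⟨h0 k, hIF k⟩
  obtain ⟨p, hkp, hpA⟩ : ∃ p, k < p ∧ p ∉ A := by
    by_contra! h
    rw [Subset.antisymm hAk h, tsum_Ioi_eq_tailSum] at hA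
    exact hk.ne' hA
  obtain ⟨B, hBp, hB⟩ := exists_subset_Ioi_tsum_eq h0 hsum hIF p ⟨h0 p, hIF p⟩
  have hkA : k ∉ insert p A := by
    rintro (h | h)
    exacts [hkp.ne h, lt_irrefl k (hAk h)]
  have hpB : p ∉ insert k B := by
    rintro (h | h)
    exacts [hkp.ne' h, lt_irrefl p (hBp h)]
  have hR : ∑' n : ↥({k, p} : Set ℕ), x n = x k + x p := by
    rw [tsum_insert_of_notMem hsum (show k ∉ ({p} : Set ℕ) from hkp.ne), tsum_singleton]
  have hRA : ∑' n : ↥(insert p A), x n = x k + x p := by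
    rw [tsum_insert_of_notMem hsum hpA, hA, add_comm]
  have hRB : ∑' n : ↥(insert k B), x n = x k + x p := by
    rw [tsum_insert_of_notMem hsum fun h => lt_asymm hkp (hBp h), hB]
  refine ⟨x k + x p, ⟨_, hR⟩,
    three_le_mk_of_ne (a := ⟨_, hR⟩) (b := ⟨_, hRA⟩) (c := ⟨_, hRB⟩) ?_ ?_ ?_⟩
  · exact fun h => hkA (Subtype.mk.inj h ▸ mem_insert k _)
  · exact fun h => hpB (Subtype.mk.inj h ▸ mem_insert_of_mem k rfl)
  · exact fun h => hkA (Subtype.mk.inj h ▸ mem_insert k _)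

lemma eq_tailSum_of_cardFun_image_subset (hpos : ∀ n, 0 < x n) (hsum : Summable x)
    (hIF : ∀ n, x n ≤ tailSum x n) (h : cardFun x '' achSet x ⊆ {1, 2}) (n : ℕ) :
    x n = tailSum x n := by
  refine (hIF n).eq_or_lt.resolve_right fun hlt => ?_
  obtain ⟨t, ht, h3⟩ := exists_three_le_cardFun hpos hsum hIF hlt
  rcases h (mem_image_of_mem _ ht) with h12 | h12 <;> rw [h12] at h3 <;> norm_num at h3

lemma eq_div_two_pow_of_eq_tailSum (hsum : Summable x) (heq : ∀ n, x n = tailSum x n)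
    (n : ℕ) : x n = 2 * x 0 / 2 ^ (n + 1) := by
  induction n with
  | zero => ring
  | succ n ih =>
    have hhalf : x (n + 1) = x n / 2 := by
      linarith [heq n, heq (n + 1), tailSum_eq_add_tailSum_succ hsum n]
    rw [hhalf, ih, div_div, ← pow_succ]

lemma eq_tailSum_of_eq_div_two_pow {c : ℝ} (hc : ∀ n, x n = c / 2 ^ (n + 1)) (n : ℕ) :
    x n = tailSum x n := by
  conv_lhs => rw [← tsum_geometric_two' (x n)]
  refine tsum_congr fun m => ?_
  rw [hc, hc, div_div, div_div]
  congr 1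
  ring

lemma eq_empty_of_tsum_eq_zero (hpos : ∀ n, 0 < x n) (hsum : Summable x) {S : Set ℕ}
    (hS : ∑' n : S, x n = 0) : S = ∅ :=
  eq_empty_iff_forall_notMem.2 fun n hn =>
    (hsum.subtype S).tsum_pos (fun _ => (hpos _).le) ⟨n, hn⟩ (hpos n) |>.ne' hS

lemma tsum_indicator_tail_eq_add_of_first_diff (hsum : Summable x) {S T : Set ℕ} {n : ℕ}
    (hST : ∑' m : S, x m = ∑' m : T, x m) (hlow : ∀ j < n, j ∈ S ↔ j ∈ T)
    (hnS : n ∈ S) (hnT : n ∉ T) :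
    ∑' i, T.indicator x (i + (n + 1)) = x n + ∑' i, S.indicator x (i + (n + 1)) := by
  have hhead : ∑ i ∈ Finset.range (n + 1), S.indicator x i =
      ∑ i ∈ Finset.range (n + 1), T.indicator x i + x n := by
    rw [Finset.sum_range_succ, Finset.sum_range_succ, indicator_of_mem hnS,
      indicator_of_notMem hnT, add_zero]
    congr 1
    refine Finset.sum_congr rfl fun i hi => ?_
    have hiST := hlow i (Finset.mem_range.1 hi)
    by_cases hiS : i ∈ S
    · rw [indicator_of_mem hiS, indicator_of_mem (hiST.1 hiS)]
    · rw [indicator_of_notMem hiS, indicator_of_notMem (mt hiST.2 hiS)]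
  have hS := (hsum.indicator S).sum_add_tsum_nat_add (n + 1)
  have hT := (hsum.indicator T).sum_add_tsum_nat_add (n + 1)
  rw [tsum_subtype, tsum_subtype] at hST
  linarith

lemma subset_Iic_and_Ioi_subset_of_tsum_eq (hpos : ∀ n, 0 < x n) (hsum : Summable x)
    {S T : Set ℕ} {n : ℕ} (hn : x n = tailSum x n) (hST : ∑' m : S, x m = ∑' m : T, x m)
    (hlow : ∀ j < n, j ∈ S ↔ j ∈ T) (hnS : n ∈ S) (hnT : n ∉ T) :
    S ⊆ Iic n ∧ Ioi n ⊆ T := by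
  have htail := tsum_indicator_tail_eq_add_of_first_diff hsum hST hlow hnS hnT
  set f := S.indicator x
  set g := T.indicator x
  have hf : Summable fun i => f (i + (n + 1)) := (summable_nat_add_iff _).2 (hsum.indicator S)
  have hg : Summable fun i => g (i + (n + 1)) := (summable_nat_add_iff _).2 (hsum.indicator T)
  have hx : Summable fun i => x (i + (n + 1)) := (summable_nat_add_iff _).2 hsum
  have hle : ∀ i, g i ≤ x i := indicator_le_self' fun i _ => (hpos i).le
  have hg_le : ∑' i, g (i + (n + 1)) ≤ x n := by
    rw [hn, tailSum_eq_tsum_add]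
    exact hg.tsum_le_tsum (fun i => hle _) hx
  constructor
  · intro j hjS
    by_contra hjn
    obtain ⟨i, rfl⟩ := Nat.exists_eq_add_of_lt (not_le.1 hjn)
    have hfi : 0 < f (i + (n + 1)) := by
      rw [show i + (n + 1) = n + i + 1 by omega]
      simpa [f, indicator_of_mem hjS] using hpos _
    have := hf.tsum_pos (fun i => indicator_nonneg (fun j _ => (hpos j).le) _) i hfi
    linarith
  · intro j hjn
    by_contra hjT
    obtain ⟨i, rfl⟩ := Nat.exists_eq_add_of_lt hjn
    have hlt : ∑' i, g (i + (n + 1)) < x n := by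
      rw [hn, tailSum_eq_tsum_add]
      refine hg.tsum_lt_tsum (i := i) (fun i => hle _) ?_ hx
      rw [show i + (n + 1) = n + i + 1 by omega]
      simpa [g, indicator_of_notMem hjT] using hpos _
    have hf0 : 0 ≤ ∑' i, f (i + (n + 1)) :=
      tsum_nonneg fun i => indicator_nonneg (fun j _ => (hpos j).le) _
    linarith

lemma finite_iff_infinite_of_tsum_eq (hpos : ∀ n, 0 < x n) (hsum : Summable x)
    (heq : ∀ n, x n = tailSum x n) {S T : Set ℕ} (hST : ∑' m : S, x m = ∑' m : T, x m)
    (hne : S ≠ T) : S.Finite ↔ T.Infinite := by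
  classical
  have hex : ∃ n, ¬(n ∈ S ↔ n ∈ T) := by
    by_contra! h
    exact hne (Set.ext h)
  set n := Nat.find hex
  have hlow : ∀ j < n, j ∈ S ↔ j ∈ T := fun j hj => not_not.1 (Nat.find_min hex hj)
  by_cases hnS : n ∈ S
  · have hnT : n ∉ T := fun h => Nat.find_spec hex (iff_of_true hnS h)
    obtain ⟨hS, hT⟩ :=
      subset_Iic_and_Ioi_subset_of_tsum_eq hpos hsum (heq n) hST hlow hnS hnT
    exact iff_of_true ((finite_Iic n).subset hS) ((Ioi_infinite n).mono hT)
  · have hnT : n ∈ T := by_contra fun h => Nat.find_spec hex (iff_of_false hnS h)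
    obtain ⟨hT, hS⟩ := subset_Iic_and_Ioi_subset_of_tsum_eq hpos hsum (heq n) hST.symm
      (fun j hj => (hlow j hj).symm) hnT hnS
    exact iff_of_false (Ioi_infinite n |>.mono hS) (not_not.2 ((finite_Iic n).subset hT))

lemma cardFun_le_two (hpos : ∀ n, 0 < x n) (hsum : Summable x)
    (heq : ∀ n, x n = tailSum x n) (t : ℝ) : cardFun x t ≤ 2 := by
  rw [cardFun, ← Cardinal.mk_Prop]
  refine Cardinal.mk_le_of_injective (f := fun S => S.1.Finite) fun S T hST => ?_
  by_contra hne
  have := finite_iff_infinite_of_tsum_eq hpos hsum heq (S.2.trans T.2.symm)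
    fun h => hne (Subtype.ext h)
  rw [show S.1.Finite = T.1.Finite from hST] at this
  exact iff_not_self this

lemma cardFun_zero (hpos : ∀ n, 0 < x n) (hsum : Summable x) : cardFun x 0 = 1 :=
  Cardinal.eq_one_iff_unique.2
    ⟨⟨fun S T => Subtype.ext <| (eq_empty_of_tsum_eq_zero hpos hsum S.2).trans
      (eq_empty_of_tsum_eq_zero hpos hsum T.2).symm⟩, ⟨⟨∅, by simp⟩⟩⟩

lemma cardFun_image_achSet (hpos : ∀ n, 0 < x n) (hsum : Summable x)
    (heq : ∀ n, x n = tailSum x n) : cardFun x '' achSet x = {1, 2} := by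
  refine Subset.antisymm ?_ ?_
  · rintro _ ⟨t, ⟨S, hS⟩, rfl⟩
    by_cases h : Subsingleton {S : Set ℕ // ∑' n : S, x n = t}
    · exact Or.inl (Cardinal.eq_one_iff_unique.2 ⟨h, ⟨⟨S, hS⟩⟩⟩)
    · rw [not_subsingleton_iff_nontrivial, nontrivial_iff] at h
      exact Or.inr (le_antisymm (cardFun_le_two hpos hsum heq t) (Cardinal.two_le_iff.2 h))
  · rintro _ (rfl | rfl)
    · exact ⟨0, ⟨∅, by simp⟩, cardFun_zero hpos hsum⟩
    · have hIoi : ∑' n : Ioi 0, x n = x 0 := by rw [tsum_Ioi_eq_tailSum, heq 0]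
      have hne : (⟨{0}, tsum_singleton 0 x⟩ : {S : Set ℕ // ∑' n : S, x n = x 0}) ≠
          ⟨Ioi 0, hIoi⟩ :=
        fun h => lt_irrefl 0 (Subtype.mk.inj h ▸ mem_singleton 0 : 0 ∈ Ioi 0)
      exact ⟨x 0, ⟨{0}, tsum_singleton 0 x⟩,
        le_antisymm (cardFun_le_two hpos hsum heq _) (Cardinal.two_le_iff.2 ⟨_, _, hne⟩)⟩

end

theorem stmt5_general (x : ℕ → ℝ) (hpos : ∀ n, 0 < x n)
    (hsum : Summable x) (hIF : ∀ n, x n ≤ tailSum x n) :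
    cardFun x '' achSet x = {1, 2} ↔ ∃ c : ℝ, c ≠ 0 ∧ ∀ n, x n = c / 2 ^ (n + 1) := by
  constructor
  · intro himg
    have heq := eq_tailSum_of_cardFun_image_subset hpos hsum hIF himg.subset
    exact ⟨2 * x 0, by linarith [hpos 0], eq_div_two_pow_of_eq_tailSum hsum heq⟩
  · rintro ⟨c, -, hc⟩
    exact cardFun_image_achSet hpos hsum (eq_tailSum_of_eq_div_two_pow hc)

theorem stmt5 (x : ℕ → ℝ) (hpos : ∀ n, 0 < x n) (hanti : ∀ n, x (n + 1) ≤ x n)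
    (hsum : Summable x) (hIF : ∀ n, x n ≤ tailSum x n) :
    cardFun x '' achSet x = {1, 2} ↔ ∃ c : ℝ, c ≠ 0 ∧ ∀ n, x n = c / 2 ^ (n + 1) :=
  stmt5_general x hpos hsum hIF
end

section
/- Let x_1 ∈ (0,1) be a non-dyadic real number and let x_n = 1/2^{n-1} for n ≥ 2. Then the range of the cardinal function of (x_n)_{n≥1} is exactly {1,2,3}. -/
open Set

/-- A dyadic rational in `[0,∞)`: a number of the form `k / 2^m`. -/
def IsDyadic (t : ℝ) : Prop := ∃ k m : ℕ, t = (k : ℝ) / 2 ^ m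

/-!
A subsum of `x` either uses `x 0 = a` or not, so `cardFun x t = N t + N (t - a)`, where `N s`
counts the binary expansions `s = ∑_{n ∈ T} 2^-(n+1)`. Two distinct expansions of the same number
agree up to a first position `m`, after which one reads `1000…` and the other `0111…`; hence one of
them is finite and the other is not. So `N s ≤ 2`, with `N s ≤ 1` unless `s` is dyadic, and
`N s = 2` for every dyadic `s ∈ (0, 1)`. As `a` is not dyadic, `t` and `t - a` are never both
dyadic, which bounds the sum by `3`; the values `1`, `2`, `3` are taken at `t = 0`, at a dyadic
`t ∈ (0, a)` and at a dyadic `t ∈ (a, 1)`.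
-/

section PositiveFamily

variable {α : Type*} {f : α → ℝ}

theorem tsum_subtype_lt_tsum_subtype (hf : Summable f) (hpos : ∀ i, 0 < f i) {A B : Set α}
    (h : A ⊂ B) : ∑' i : A, f i < ∑' i : B, f i := by
  obtain ⟨i, hiB, hiA⟩ := exists_of_ssubset h
  rw [tsum_subtype, tsum_subtype]
  refine (hf.indicator A).tsum_lt_tsum (i := i)
    (indicator_le_indicator_of_subset h.subset fun j => (hpos j).le) ?_ (hf.indicator B)
  rw [indicator_of_notMem hiA, indicator_of_mem hiB]
  exact hpos i

theorem eq_of_subset_of_tsum_subtype_le (hf : Summable f) (hpos : ∀ i, 0 < f i) {A B : Set α}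
    (h : A ⊆ B) (hle : ∑' i : B, f i ≤ ∑' i : A, f i) : A = B :=
  (eq_or_ssubset_of_subset h).resolve_right fun hs =>
    (tsum_subtype_lt_tsum_subtype hf hpos hs).not_ge hle

theorem tsum_subtype_le_tsum_subtype (hf : Summable f) (hf0 : ∀ i, 0 ≤ f i) {A B : Set α}
    (h : A ⊆ B) : ∑' i : A, f i ≤ ∑' i : B, f i := by
  rw [tsum_subtype, tsum_subtype]
  exact (hf.indicator A).tsum_le_tsum (indicator_le_indicator_of_subset h hf0) (hf.indicator B)

end PositiveFamily

theorem mem_achSet_iff_cardFun_ne_zero {x : ℕ → ℝ} {t : ℝ} :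
    t ∈ achSet x ↔ cardFun x t ≠ 0 := by
  rw [cardFun, Cardinal.mk_ne_zero_iff, nonempty_subtype]
  rfl

section FirstTerm

variable {x : ℕ → ℝ}

theorem tsum_subtype_eq_indicator_zero_add (hx : Summable x) (S : Set ℕ) :
    ∑' n : S, x n = S.indicator x 0 + ∑' n : Nat.succ ⁻¹' S, x (n + 1) := by
  rw [tsum_subtype, tsum_subtype _ (fun n => x (n + 1)), (hx.indicator S).tsum_eq_zero_add]
  rfl

theorem image_succ_preimage_succ {S : Set ℕ} (h : 0 ∉ S) : Nat.succ '' (Nat.succ ⁻¹' S) = S := by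
  ext (_ | n) <;> simp [h]

theorem insert_zero_image_succ_preimage_succ {S : Set ℕ} (h : 0 ∈ S) :
    insert 0 (Nat.succ '' (Nat.succ ⁻¹' S)) = S := by
  ext (_ | n) <;> simp [h]

theorem cardFun_eq_add (hx : Summable x) (t : ℝ) :
    cardFun x t = cardFun (fun n => x (n + 1)) t + cardFun (fun n => x (n + 1)) (t - x 0) := by
  classical
  have hsplit := tsum_subtype_eq_indicator_zero_add hx
  have hsucc (T : Set ℕ) : Nat.succ ⁻¹' (Nat.succ '' T) = T :=
    preimage_image_eq T Nat.succ_injective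
  have hins (T : Set ℕ) : Nat.succ ⁻¹' insert 0 (Nat.succ '' T) = T := by
    rw [← hsucc T]; ext; simp
  let e : {S : Set ℕ // ∑' n : S, x n = t} ≃
      {T : Set ℕ // ∑' n : T, x (n + 1) = t} ⊕ {T : Set ℕ // ∑' n : T, x (n + 1) = t - x 0} :=
    { toFun := fun S =>
        if h : 0 ∈ S.1 then
          .inr ⟨Nat.succ ⁻¹' S.1, by simpa [hsplit, h, eq_sub_iff_add_eq'] using S.2⟩
        else
          .inl ⟨Nat.succ ⁻¹' S.1, by simpa [hsplit, h] using S.2⟩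
      invFun := Sum.elim
        (fun T => ⟨Nat.succ '' T.1, by
          rw [hsplit, indicator_of_notMem (by simp), zero_add, hsucc, T.2]⟩)
        (fun T => ⟨insert 0 (Nat.succ '' T.1), by
          rw [hsplit, indicator_of_mem (mem_insert 0 _), hins, T.2]
          ring⟩)
      left_inv := by
        rintro ⟨S, hS⟩
        by_cases h : 0 ∈ S
        · simp only [dif_pos h, Sum.elim_inr]
          exact Subtype.ext (insert_zero_image_succ_preimage_succ h)
        · simp only [dif_neg h, Sum.elim_inl]
          exact Subtype.ext (image_succ_preimage_succ h)
      right_inv := by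
        rintro (⟨T, hT⟩ | ⟨T, hT⟩)
        · simp [hsucc]
        · simp [hins] }
  rw [cardFun, cardFun, cardFun, Cardinal.add_def]
  exact Cardinal.mk_congr e

end FirstTerm

section Dyadic

theorem isDyadic_iff {t : ℝ} : IsDyadic t ↔ 0 ≤ t ∧ ∃ (k : ℤ) (m : ℕ), t = k / 2 ^ m := by
  constructor
  · rintro ⟨k, m, rfl⟩
    exact ⟨by positivity, k, m, by simp⟩
  · rintro ⟨ht, k, m, rfl⟩
    have hk : (0 : ℝ) ≤ k := by simpa using (le_div_iff₀ (by positivity : (0 : ℝ) < 2 ^ m)).1 ht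
    refine ⟨k.toNat, m, ?_⟩
    rw [← Int.cast_natCast, Int.toNat_of_nonneg (Int.cast_nonneg_iff.1 hk)]

theorem IsDyadic.add {u v : ℝ} (hu : IsDyadic u) (hv : IsDyadic v) : IsDyadic (u + v) := by
  obtain ⟨k, m, rfl⟩ := hu
  obtain ⟨l, n, rfl⟩ := hv
  refine ⟨k * 2 ^ n + l * 2 ^ m, m + n, ?_⟩
  push_cast
  field_simp
  ring

theorem IsDyadic.sub {u v : ℝ} (hu : IsDyadic u) (hv : IsDyadic v) (h : v ≤ u) :
    IsDyadic (u - v) := by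
  obtain ⟨k, m, rfl⟩ := hu
  obtain ⟨l, n, rfl⟩ := hv
  refine isDyadic_iff.2 ⟨sub_nonneg.2 h, k * 2 ^ n - l * 2 ^ m, m + n, ?_⟩
  push_cast
  field_simp
  ring

theorem exists_isDyadic_mem_Ioo {u v : ℝ} (hu : 0 ≤ u) (huv : u < v) :
    ∃ d, IsDyadic d ∧ d ∈ Ioo u v := by
  obtain ⟨m, hm⟩ := exists_pow_lt_of_lt_one (sub_pos.2 huv) (one_half_lt_one (α := ℝ))
  have h2m : (0 : ℝ) < 2 ^ m := by positivity
  refine ⟨(⌊2 ^ m * u⌋₊ + 1 : ℕ) / 2 ^ m, ⟨_, m, rfl⟩, ?_, ?_⟩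
  · rw [lt_div_iff₀ h2m, mul_comm]
    exact_mod_cast Nat.lt_floor_add_one _
  · rw [div_lt_iff₀ h2m]
    have hfloor := Nat.floor_le (by positivity : 0 ≤ 2 ^ m * u)
    have hgap : 1 < (v - u) * 2 ^ m := by rwa [one_div_pow, div_lt_iff₀ h2m] at hm
    push_cast
    linarith

end Dyadic

noncomputable def binaryWeight (n : ℕ) : ℝ := 1 / 2 ^ (n + 1)

/-- `binSum T` is the number with binary expansion `0.d₀d₁d₂…`, `dₙ = 1 ↔ n ∈ T`, so
`cardFun binaryWeight s` counts the binary expansions of `s`. -/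
noncomputable def binSum (T : Set ℕ) : ℝ := ∑' n : T, binaryWeight n

theorem binaryWeight_pos (n : ℕ) : 0 < binaryWeight n := by
  unfold binaryWeight
  positivity

theorem summable_binaryWeight : Summable binaryWeight :=
  (summable_geometric_two' 1).congr fun n => by simp only [binaryWeight]; ring

theorem isDyadic_binaryWeight (n : ℕ) : IsDyadic (binaryWeight n) :=
  ⟨1, n + 1, by simp [binaryWeight]⟩

theorem binSum_nonneg (T : Set ℕ) : 0 ≤ binSum T :=
  tsum_nonneg fun n => (binaryWeight_pos n).le

@[simp]
theorem binSum_empty : binSum ∅ = 0 := tsum_empty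

theorem binSum_le_binSum {A B : Set ℕ} (h : A ⊆ B) : binSum A ≤ binSum B :=
  tsum_subtype_le_tsum_subtype summable_binaryWeight (fun n => (binaryWeight_pos n).le) h

theorem eq_of_subset_of_binSum_le {A B : Set ℕ} (h : A ⊆ B) (hle : binSum B ≤ binSum A) : A = B :=
  eq_of_subset_of_tsum_subtype_le summable_binaryWeight binaryWeight_pos h hle

theorem binSum_union {A B : Set ℕ} (h : Disjoint A B) : binSum (A ∪ B) = binSum A + binSum B :=
  summable_binaryWeight.subtype _ |>.tsum_union_disjoint h (summable_binaryWeight.subtype _)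

theorem binSum_insert {A : Set ℕ} {m : ℕ} (h : m ∉ A) :
    binSum (insert m A) = binaryWeight m + binSum A := by
  rw [insert_eq, binSum_union (disjoint_singleton_left.2 h), binSum, tsum_singleton]

theorem binSum_Ioi (m : ℕ) : binSum (Ioi m) = binaryWeight m := by
  have hrange : Ioi m = range (· + (m + 1)) := by
    ext n
    simp only [mem_Ioi, mem_range]
    exact ⟨fun h => ⟨n - (m + 1), by omega⟩, fun ⟨k, hk⟩ => by omega⟩
  rw [binSum, hrange, tsum_range _ (add_left_injective _)]
  calc ∑' k, binaryWeight (k + (m + 1)) = ∑' k, binaryWeight m / 2 / 2 ^ k :=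
        tsum_congr fun k => by simp only [binaryWeight]; ring
    _ = binaryWeight m := tsum_geometric_two' _

/-- The binary identity `0.w0111… = 0.w1000…`. -/
theorem binSum_insert_eq_binSum_union_Ioi {A : Set ℕ} {m : ℕ} (hA : A ⊆ Iio m) :
    binSum (insert m A) = binSum (A ∪ Ioi m) := by
  rw [binSum_insert fun h => lt_irrefl m (hA h), binSum_union, binSum_Ioi, add_comm]
  exact disjoint_left.2 fun n hn hn' => lt_asymm (hA hn) (mem_Ioi.1 hn')

/-- At the first index `m` where two representations differ, the one containing `m` must stop
there and the other must contain everything after `m`. -/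
theorem finite_and_infinite_of_binSum_eq {T T' : Set ℕ} (h : binSum T = binSum T') {m : ℕ}
    (hmT : m ∈ T) (hmT' : m ∉ T') (hlt : T ∩ Iio m = T' ∩ Iio m) : T.Finite ∧ T'.Infinite := by
  set A := T ∩ Iio m
  have hsub : insert m A ⊆ T := insert_subset hmT inter_subset_left
  have hsub' : T' ⊆ A ∪ Ioi m := by
    intro n hn
    rcases lt_trichotomy n m with hnm | rfl | hnm
    · exact Or.inl (hlt ▸ ⟨hn, hnm⟩)
    · exact absurd hn hmT'
    · exact Or.inr hnm
  have hA := binSum_insert_eq_binSum_union_Ioi (A := A) inter_subset_right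
  have hT : insert m A = T :=
    eq_of_subset_of_binSum_le hsub (by rw [h, hA]; exact binSum_le_binSum hsub')
  have hT' : T' = A ∪ Ioi m :=
    eq_of_subset_of_binSum_le hsub' (by rw [← hA, ← h]; exact binSum_le_binSum hsub)
  exact ⟨hT ▸ ((finite_Iio m).subset inter_subset_right).insert m,
    hT' ▸ (Ioi_infinite m).mono subset_union_right⟩

theorem finite_iff_infinite_of_binSum_eq {T T' : Set ℕ} (h : binSum T = binSum T')
    (hne : T ≠ T') : T.Finite ↔ T'.Infinite := by
  classical
  have hex : ∃ n, ¬(n ∈ T ↔ n ∈ T') := by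
    by_contra! hall
    exact hne (ext hall)
  have hm := Nat.find_spec hex
  have hlt : T ∩ Iio (Nat.find hex) = T' ∩ Iio (Nat.find hex) := by
    ext n
    exact and_congr_left fun hn => not_not.1 (Nat.find_min hex hn)
  by_cases hmT : Nat.find hex ∈ T
  · obtain ⟨hfin, hinf⟩ := finite_and_infinite_of_binSum_eq h hmT (by tauto) hlt
    exact iff_of_true hfin hinf
  · obtain ⟨hfin, hinf⟩ := finite_and_infinite_of_binSum_eq h.symm (by tauto) hmT hlt.symm
    exact iff_of_false hinf (not_not.2 hfin)

theorem isDyadic_binSum {T : Set ℕ} (hT : T.Finite) : IsDyadic (binSum T) := by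
  induction T, hT using Finite.induction_on with
  | empty => exact ⟨0, 0, by simp⟩
  | @insert m A hm _ ih =>
    rw [binSum_insert hm]
    exact (isDyadic_binaryWeight m).add ih

theorem exists_ne_binSum_eq {T : Set ℕ} (hT : T.Finite) (hne : T.Nonempty) :
    ∃ T', T' ≠ T ∧ binSum T' = binSum T := by
  set m := sSup T
  have hm : m ∈ T := Nat.sSup_mem hne hT.bddAbove
  have hA : T \ {m} ⊆ Iio m := fun n hn =>
    lt_of_le_of_ne (le_csSup hT.bddAbove hn.1) hn.2
  refine ⟨T \ {m} ∪ Ioi m, fun heq => ?_, ?_⟩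
  · have : m ∈ T \ {m} ∪ Ioi m := by rwa [heq]
    simp at this
  · rw [← binSum_insert_eq_binSum_union_Ioi hA, insert_sdiff_singleton, insert_eq_of_mem hm]

theorem binSum_setOf_digits_eq {s : ℝ} (hs : s ∈ Ico 0 1) :
    binSum {n | Real.digits s 2 n = 1} = s := by
  conv_rhs => rw [← Real.ofDigits_digits one_lt_two hs]
  rw [binSum, tsum_subtype, Real.ofDigits]
  congr 1
  ext n
  have hdigit : ∀ d : Fin 2, d = 0 ∨ d = 1 := by decide
  rcases hdigit (Real.digits s 2 n) with h | h <;> simp [h, Real.ofDigitsTerm, binaryWeight]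

theorem finite_setOf_digits {s : ℝ} (hs : IsDyadic s) : {n | Real.digits s 2 n = 1}.Finite := by
  obtain ⟨k, m, rfl⟩ := hs
  refine (finite_Iio m).subset fun n hn => ?_
  by_contra hnm
  have hpow : (k : ℝ) / 2 ^ m * 2 ^ (n + 1) = ((2 * (k * 2 ^ (n - m)) : ℕ) : ℝ) := by
    rw [show n + 1 = (n - m) + 1 + m by simp at hnm; omega]
    push_cast
    field_simp
    ring
  simp [Real.digits, Fin.ext_iff] at hn
  rw [hpow, Nat.floor_natCast] at hn
  omega

theorem cardFun_binaryWeight_le_two (s : ℝ) : cardFun binaryWeight s ≤ 2 := by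
  rw [← Cardinal.mk_Prop]
  refine Cardinal.mk_le_of_injective (f := fun T : {T // binSum T = s} => T.1.Finite) ?_
  rintro ⟨T, hT⟩ ⟨T', hT'⟩ hfin
  by_contra hne
  have hfin : T.Finite = T'.Finite := hfin
  have := finite_iff_infinite_of_binSum_eq (hT.trans hT'.symm) (fun h => hne (Subtype.ext h))
  rw [hfin] at this
  exact iff_not_self this

theorem cardFun_binaryWeight_le_one {s : ℝ} (hs : ¬IsDyadic s) : cardFun binaryWeight s ≤ 1 := by
  refine Cardinal.le_one_iff_subsingleton.2 ⟨fun ⟨T, hT⟩ ⟨T', hT'⟩ => Subtype.ext ?_⟩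
  by_contra hne
  by_cases hfin : T.Finite
  · exact hs (hT ▸ isDyadic_binSum hfin)
  · have hfin' : T'.Finite := not_not.1 fun h =>
      hfin ((finite_iff_infinite_of_binSum_eq (hT.trans hT'.symm) hne).2 h)
    exact hs (hT' ▸ isDyadic_binSum hfin')

theorem cardFun_binaryWeight_of_neg {s : ℝ} (hs : s < 0) : cardFun binaryWeight s = 0 :=
  Cardinal.mk_eq_zero_iff.2 ⟨fun ⟨T, hT⟩ => (binSum_nonneg T).not_gt (by rwa [binSum, hT])⟩

theorem cardFun_binaryWeight_zero : cardFun binaryWeight 0 = 1 := by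
  have hempty {T : Set ℕ} (hT : binSum T = 0) : T = ∅ :=
    (eq_of_subset_of_binSum_le (empty_subset T) (by simp [hT])).symm
  refine Cardinal.eq_one_iff_unique.2 ⟨⟨fun ⟨T, hT⟩ ⟨T', hT'⟩ => ?_⟩, ⟨⟨∅, binSum_empty⟩⟩⟩
  exact Subtype.ext ((hempty hT).trans (hempty hT').symm)

theorem cardFun_binaryWeight_of_not_isDyadic {s : ℝ} (hs : s ∈ Ico 0 1) (hd : ¬IsDyadic s) :
    cardFun binaryWeight s = 1 :=
  le_antisymm (cardFun_binaryWeight_le_one hd) <| Cardinal.one_le_iff_ne_zero.2 <|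
    Cardinal.mk_ne_zero_iff.2 ⟨⟨_, binSum_setOf_digits_eq hs⟩⟩

theorem cardFun_binaryWeight_of_isDyadic {s : ℝ} (hs : s ∈ Ioo 0 1) (hd : IsDyadic s) :
    cardFun binaryWeight s = 2 := by
  set T := {n | Real.digits s 2 n = 1}
  have hT : binSum T = s := binSum_setOf_digits_eq (Ioo_subset_Ico_self hs)
  have hne : T.Nonempty := nonempty_iff_ne_empty.2 fun h => hs.1.ne' (by simp [← hT, h])
  obtain ⟨T', hT'T, hT'⟩ := exists_ne_binSum_eq (finite_setOf_digits hd) hne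
  refine le_antisymm (cardFun_binaryWeight_le_two s) (Cardinal.two_le_iff.2 ?_)
  exact ⟨⟨T', hT'.trans hT⟩, ⟨T, hT⟩, fun h => hT'T (congrArg Subtype.val h)⟩

theorem Cardinal.add_mem_of_le_two {m n : Cardinal} (hm : m ≤ 2) (hn : n ≤ 2)
    (h : m ≤ 1 ∨ n ≤ 1) (h0 : m + n ≠ 0) : m + n ∈ ({1, 2, 3} : Set Cardinal) := by
  obtain ⟨i, hi, rfl⟩ := Cardinal.exists_nat_eq_of_le_nat (n := 2) hm
  obtain ⟨j, hj, rfl⟩ := Cardinal.exists_nat_eq_of_le_nat (n := 2) hn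
  simp only [mem_insert_iff, mem_singleton_iff]
  norm_cast at h h0 ⊢
  omega

theorem not_isDyadic_sub {a t : ℝ} (ha : 0 ≤ a) (had : ¬IsDyadic a) (ht : IsDyadic t) :
    ¬IsDyadic (t - a) := fun h =>
  had (by simpa using ht.sub h (by linarith))

theorem cardFun_binaryWeight_add_mem {a t : ℝ} (ha : 0 ≤ a) (had : ¬IsDyadic a)
    (h0 : cardFun binaryWeight t + cardFun binaryWeight (t - a) ≠ 0) :
    cardFun binaryWeight t + cardFun binaryWeight (t - a) ∈ ({1, 2, 3} : Set Cardinal) := by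
  refine Cardinal.add_mem_of_le_two (cardFun_binaryWeight_le_two _)
    (cardFun_binaryWeight_le_two _) ?_ h0
  by_cases ht : IsDyadic t
  · exact Or.inr (cardFun_binaryWeight_le_one (not_isDyadic_sub ha had ht))
  · exact Or.inl (cardFun_binaryWeight_le_one ht)

theorem exists_cardFun_binaryWeight_add_eq {a : ℝ} (ha : a ∈ Ioo 0 1) (had : ¬IsDyadic a)
    {c : Cardinal} (hc : c ∈ ({1, 2, 3} : Set Cardinal)) :
    ∃ t, cardFun binaryWeight t + cardFun binaryWeight (t - a) = c := by
  obtain ⟨ha0, ha1⟩ := ha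
  rcases hc with rfl | rfl | rfl
  · refine ⟨0, ?_⟩
    rw [cardFun_binaryWeight_zero, cardFun_binaryWeight_of_neg (by linarith), add_zero]
  · obtain ⟨d, hd, hd0, hda⟩ := exists_isDyadic_mem_Ioo le_rfl ha0
    refine ⟨d, ?_⟩
    rw [cardFun_binaryWeight_of_isDyadic ⟨hd0, hda.trans ha1⟩ hd,
      cardFun_binaryWeight_of_neg (by linarith), add_zero]
  · obtain ⟨d, hd, had', hd1⟩ := exists_isDyadic_mem_Ioo ha0.le ha1
    refine ⟨d, ?_⟩
    rw [cardFun_binaryWeight_of_isDyadic ⟨ha0.trans had', hd1⟩ hd,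
      cardFun_binaryWeight_of_not_isDyadic ⟨by linarith, by linarith⟩
        (not_isDyadic_sub ha0.le had hd)]
    norm_num

theorem stmt9 (a : ℝ) (ha : a ∈ Set.Ioo (0 : ℝ) 1) (had : ¬ IsDyadic a)
    (x : ℕ → ℝ) (hx0 : x 0 = a) (hx : ∀ n, 1 ≤ n → x n = 1 / 2 ^ n) :
    cardFun x '' achSet x = {1, 2, 3} := by
  have hshift : (fun n => x (n + 1)) = binaryWeight := funext fun n => hx (n + 1) n.succ_pos
  have hsplit (t : ℝ) : cardFun x t = cardFun binaryWeight t + cardFun binaryWeight (t - a) := by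
    rw [cardFun_eq_add ((summable_nat_add_iff 1).1 (hshift ▸ summable_binaryWeight)), hshift, hx0]
  ext c
  simp only [mem_image, mem_achSet_iff_cardFun_ne_zero, hsplit]
  constructor
  · rintro ⟨t, ht, rfl⟩
    exact cardFun_binaryWeight_add_mem ha.1.le had ht
  · intro hc
    obtain ⟨t, ht⟩ := exists_cardFun_binaryWeight_add_eq ha had hc
    refine ⟨t, ht ▸ ?_, ht⟩
    rintro rfl
    norm_num at hc
end
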